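/- arXiv:2008.02094 — 3 statements merged into one kernel-verified Lean document; each statement's English description precedes it below -/
import Mathlib

section
/- If (cₙ)ₙ≥₁ is a square-summable real sequence and Σₙ cₙ e^{-n²t} = 0 for all t in a nondegenerate interval [a,b] with a > 0, then cₙ = 0 for all n. -/
/-!
The substitution `x = e^{-t}` turns `∑ cₙ e^{-(n+1)² t}` into the power series
`∑ₖ aₖ xᵏ` whose coefficient `aₖ` is `cₙ` when `k = (n+1)²` and `0` when `k` is not a square.
Since `(cₙ)` is bounded, this series converges on the unit disc and is analytic there; it
vanishes on the interval `(e^{-b}, e^{-a})` inside the disc, so by the identity theorem all its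
coefficients vanish.
-/

open Real
open Filter Topology Function

namespace FormalMultilinearSeries

theorem eq_zero_of_ofScalarsSum_eventuallyEq_zero {𝕜 : Type*} [RCLike 𝕜] {a : ℕ → 𝕜}
    {x₀ : 𝕜} (hx₀ : x₀ ∈ Metric.eball 0 (ofScalars 𝕜 a).radius)
    (h : ofScalarsSum a =ᶠ[𝓝 x₀] 0) : a = 0 := by
  set p := ofScalars 𝕜 a
  have hp : HasFPowerSeriesOnBall p.sum p 0 p.radius :=
    p.hasFPowerSeriesOnBall (pos_of_gt (by simpa using hx₀))
  have hball : Set.EqOn p.sum 0 (Metric.eball 0 p.radius) :=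
    hp.analyticOnNhd.eqOn_zero_of_preconnected_of_eventuallyEq_zero
      (convex_eball 0 _).isPreconnected hx₀ h
  rw [← ofScalars_series_eq_zero 𝕜]
  exact hp.hasFPowerSeriesAt.eq_zero_of_eventually <|
    Filter.mem_of_superset (Metric.eball_mem_nhds 0 hp.r_pos) hball

theorem one_le_ofScalars_radius_of_bddAbove {𝕜 : Type*} [NontriviallyNormedField 𝕜]
    {a : ℕ → 𝕜} (ha : BddAbove (Set.range fun k => ‖a k‖)) : 1 ≤ (ofScalars 𝕜 a).radius := by
  obtain ⟨C, hC⟩ := ha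
  simpa using (ofScalars 𝕜 a).le_radius_of_bound C (r := 1) fun k => by
    simpa using hC (Set.mem_range_self k)

end FormalMultilinearSeries

open FormalMultilinearSeries

theorem tsum_extend_mul_pow {α : Type*} [Semiring α] [TopologicalSpace α] {e : ℕ → ℕ}
    (he : Injective e) (c : ℕ → α) (x : α) :
    ∑' k, extend e c 0 k * x ^ k = ∑' n, c n * x ^ e n := by
  rw [← tsum_extend_zero he fun n => c n * x ^ e n]
  congr 1
  ext k
  by_cases hk : ∃ n, e n = k
  · obtain ⟨n, rfl⟩ := hk
    simp [he.extend_apply]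
  · simp [extend_apply' _ _ _ hk]

theorem bddAbove_range_norm_extend_zero {α : Type*} [SeminormedAddGroup α] {e : ℕ → ℕ}
    (he : Injective e) {c : ℕ → α} (hc : BddAbove (Set.range fun n => ‖c n‖)) :
    BddAbove (Set.range fun k => ‖extend e c 0 k‖) := by
  obtain ⟨C, hC⟩ := hc
  refine ⟨max C 0, Set.forall_mem_range.2 fun k => ?_⟩
  by_cases hk : ∃ n, e n = k
  · obtain ⟨n, rfl⟩ := hk
    rw [he.extend_apply]
    exact (hC (Set.mem_range_self n)).trans (le_max_left _ _)
  · simp [extend_apply' _ _ _ hk]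

theorem eq_zero_of_tsum_mul_exp_eq_zero {c : ℕ → ℝ} (hc : BddAbove (Set.range fun n => ‖c n‖))
    {e : ℕ → ℕ} (he : Injective e) {a b : ℝ} (ha : 0 < a) (hab : a < b)
    (h : ∀ t ∈ Set.Ioo a b, ∑' n, c n * exp (-(e n : ℝ) * t) = 0) : c = 0 := by
  obtain ⟨t₀, ht₀⟩ := Set.nonempty_Ioo.2 hab
  have hx₀ : exp (-t₀) ∈ Metric.eball 0 (ofScalars ℝ (extend e c 0)).radius := by
    refine lt_of_lt_of_le ?_
      (one_le_ofScalars_radius_of_bddAbove (bddAbove_range_norm_extend_zero he hc))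
    rw [edist_zero_right, Real.enorm_of_nonneg (exp_pos _).le,
      ENNReal.ofReal_lt_one, exp_lt_one_iff, neg_lt_zero]
    exact ha.trans ht₀.1
  have hlog : ∀ᶠ x in 𝓝 (exp (-t₀)), 0 < x ∧ -log x ∈ Set.Ioo a b := by
    refine Filter.Eventually.and (Ioi_mem_nhds (exp_pos _)) ?_
    refine ((continuousAt_log (exp_pos _).ne').neg).eventually (isOpen_Ioo.mem_nhds ?_)
    rwa [Pi.neg_apply, log_exp, neg_neg]
  have hextend := eq_zero_of_ofScalarsSum_eventuallyEq_zero hx₀ <|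
    hlog.mono fun x ⟨hx, ht⟩ => by
      rw [Pi.zero_apply, ofScalars_sum_eq, ← h _ ht]
      simp only [smul_eq_mul]
      rw [tsum_extend_mul_pow he]
      congr! 2 with n
      rw [neg_mul_neg, exp_nat_mul, exp_log hx]
  funext n
  simpa [he.extend_apply] using congr_fun hextend (e n)

/-- If (cₙ)ₙ≥₁ ∈ ℓ² and Σₙ cₙ e^{-n²t} = 0 for all t in a nondegenerate interval
[a,b] with a > 0, then all cₙ vanish. (Here c n stands for c_{n+1}.) -/
theorem stmt_4 (c : ℕ → ℝ) (hc : Memℓp c 2) (a b : ℝ) (ha : 0 < a) (hab : a < b)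
    (h : ∀ t ∈ Set.Icc a b,
      ∑' n : ℕ, c n * Real.exp (-((n : ℝ) + 1) ^ 2 * t) = 0) :
    ∀ n, c n = 0 := by
  have hbdd : BddAbove (Set.range fun n => ‖c n‖) :=
    memℓp_infty_iff.1 (hc.of_exponent_ge le_top)
  have hsq : Injective fun n : ℕ => (n + 1) ^ 2 := fun m n hmn => by
    simpa using Nat.pow_left_injective two_ne_zero hmn
  refine congr_fun (eq_zero_of_tsum_mul_exp_eq_zero hbdd hsq ha hab fun t ht => ?_)
  simpa using h t (Set.Ioo_subset_Icc_self ht)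
end

section
/- Let Q = GG* with G : W → Z bounded and injective adjoint G*. Setting u_α = G*(αI+Q)^{-1}z for α ∈ (0,1], one has the identity G u_α = z - α(αI+Q)^{-1}z; consequently lim_{α→0⁺} G u_α = z for every z ∈ Z. -/
/-!
Since `α R_α z + Q R_α z = z` and `Q R_α z = G G* R_α z = G u_α`, the identity is immediate.
For the limit, positivity of `Q` makes every `α R_α` a contraction, and on the range of `Q`
one has `α R_α Q w = α w - α² R_α w = O(α)`. The range of `Q = GG*` is dense, its closure
being `(ker Q)ᗮ = (ker G*)ᗮ = Z`, and a uniformly bounded family of operators that tends to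
zero on a dense set tends to zero everywhere.
-/

open Filter Topology ContinuousLinearMap
open scoped RealInnerProductSpace

theorem tendsto_apply_zero_of_dense {ι 𝕜 E F : Type*} [NormedField 𝕜]
    [SeminormedAddCommGroup E] [NormedSpace 𝕜 E] [SeminormedAddCommGroup F] [NormedSpace 𝕜 F]
    {l : Filter ι} {T : ι → E →L[𝕜] F} {C : ℝ} (hC : 0 ≤ C) (hT : ∀ᶠ i in l, ∀ x, ‖T i x‖ ≤ C * ‖x‖)
    {S : Set E} (hS : Dense S) (hTS : ∀ y ∈ S, Tendsto (fun i => T i y) l (𝓝 0)) (x : E) :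
    Tendsto (fun i => T i x) l (𝓝 0) := by
  rw [Metric.tendsto_nhds]
  intro ε hε
  obtain ⟨y, hyS, hxy⟩ := hS.exists_dist_lt x (show 0 < ε / (2 * (C + 1)) by positivity)
  have hCxy : C * ‖x - y‖ < ε / 2 := by
    rw [← dist_eq_norm]
    calc C * dist x y ≤ C * (ε / (2 * (C + 1))) := by gcongr
      _ < ε / 2 := by field_simp; linarith
  filter_upwards [hT, Metric.tendsto_nhds.1 (hTS y hyS) (ε / 2) (half_pos hε)] with i hi hiy
  rw [dist_zero_right] at hiy ⊢
  calc ‖T i x‖ = ‖T i (x - y) + T i y‖ := by rw [← map_add, sub_add_cancel]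
    _ ≤ C * ‖x - y‖ + ‖T i y‖ := (norm_add_le _ _).trans (by gcongr; exact hi _)
    _ < ε / 2 + ε / 2 := by gcongr
    _ = ε := add_halves ε

theorem denseRange_self_comp_adjoint {𝕜 E F : Type*} [RCLike 𝕜]
    [NormedAddCommGroup E] [InnerProductSpace 𝕜 E] [CompleteSpace E]
    [NormedAddCommGroup F] [InnerProductSpace 𝕜 F] [CompleteSpace F]
    (T : E →L[𝕜] F) (hT : Function.Injective (adjoint T)) : DenseRange (T ∘L adjoint T) := by
  have hker : (T ∘L adjoint T).ker = ⊥ := by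
    rw [ker_self_comp_adjoint]
    exact LinearMap.ker_eq_bot.mpr hT
  have hclosure : (T ∘L adjoint T).range.topologicalClosure = ⊤ := by
    rw [← (isPositive_self_comp_adjoint T).isSelfAdjoint.adjoint_eq, ← orthogonal_ker, hker,
      Submodule.bot_orthogonal_eq_top]
  exact Submodule.dense_iff_topologicalClosure_eq_top.mpr hclosure

section Resolvent

variable {Z : Type*} [NormedAddCommGroup Z] [InnerProductSpace ℝ Z] {Q R : Z →L[ℝ] Z} {α : ℝ}

theorem smul_apply_add_apply_of_comp_eq_id
    (h : (α • ContinuousLinearMap.id ℝ Z + Q) ∘L R = ContinuousLinearMap.id ℝ Z) (x : Z) :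
    α • R x + Q (R x) = x := by
  simpa using congr($h x)

theorem apply_apply_eq_sub_of_comp_eq_id
    (h : R ∘L (α • ContinuousLinearMap.id ℝ Z + Q) = ContinuousLinearMap.id ℝ Z) (x : Z) :
    R (Q x) = x - α • R x := by
  have hx : α • R x + R (Q x) = x := by simpa using congr($h x)
  exact eq_sub_of_add_eq' hx

theorem norm_smul_apply_le_of_comp_eq_id (hQ : Q.IsPositive) (hα : 0 < α)
    (h : (α • ContinuousLinearMap.id ℝ Z + Q) ∘L R = ContinuousLinearMap.id ℝ Z) (x : Z) :
    ‖α • R x‖ ≤ ‖x‖ := by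
  have hsq : ‖α • R x‖ ^ 2 ≤ ‖x‖ * ‖α • R x‖ :=
    calc ‖α • R x‖ ^ 2 = α * ⟪α • R x, R x⟫ := by
          rw [← real_inner_self_eq_norm_sq, real_inner_smul_right]
      _ ≤ α * (⟪α • R x, R x⟫ + ⟪Q (R x), R x⟫) := by
          gcongr
          exact le_add_of_nonneg_right (hQ.inner_nonneg_left _)
      _ = ⟪x, α • R x⟫ := by
          rw [← inner_add_left, smul_apply_add_apply_of_comp_eq_id h, real_inner_smul_right]
      _ ≤ ‖x‖ * ‖α • R x‖ := real_inner_le_norm _ _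
  nlinarith [norm_nonneg x, norm_nonneg (α • R x)]

theorem norm_smul_apply_apply_le_of_comp_eq_id (hQ : Q.IsPositive) (hα : 0 < α)
    (hl : (α • ContinuousLinearMap.id ℝ Z + Q) ∘L R = ContinuousLinearMap.id ℝ Z)
    (hr : R ∘L (α • ContinuousLinearMap.id ℝ Z + Q) = ContinuousLinearMap.id ℝ Z) (w : Z) :
    ‖α • R (Q w)‖ ≤ 2 * α * ‖w‖ := by
  rw [apply_apply_eq_sub_of_comp_eq_id hr, smul_sub]
  calc ‖α • w - α • α • R w‖ ≤ ‖α • w‖ + ‖α • α • R w‖ := norm_sub_le _ _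
    _ = α * ‖w‖ + α * ‖α • R w‖ := by
        rw [norm_smul α w, norm_smul α (α • R w), Real.norm_of_nonneg hα.le]
    _ ≤ α * ‖w‖ + α * ‖w‖ := by
        gcongr
        exact norm_smul_apply_le_of_comp_eq_id hQ hα hl w
    _ = 2 * α * ‖w‖ := by ring

theorem tendsto_smul_apply_of_comp_eq_id {R : ℝ → Z →L[ℝ] Z} (hQ : Q.IsPositive)
    (hQ_dense : DenseRange Q)
    (hR : ∀ α : ℝ, 0 < α →
      (α • ContinuousLinearMap.id ℝ Z + Q) ∘L R α = ContinuousLinearMap.id ℝ Z ∧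
      R α ∘L (α • ContinuousLinearMap.id ℝ Z + Q) = ContinuousLinearMap.id ℝ Z) (z : Z) :
    Tendsto (fun α => α • R α z) (𝓝[>] 0) (𝓝 0) := by
  refine tendsto_apply_zero_of_dense (T := fun α => α • R α) zero_le_one ?_ hQ_dense ?_ z
  · filter_upwards [self_mem_nhdsWithin] with α hα x
    simpa using norm_smul_apply_le_of_comp_eq_id hQ hα (hR α hα).1 x
  · rintro _ ⟨w, rfl⟩
    refine squeeze_zero_norm' (a := fun α => 2 * α * ‖w‖) ?_ ?_
    · filter_upwards [self_mem_nhdsWithin] with α hα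
      exact norm_smul_apply_apply_le_of_comp_eq_id hQ hα (hR α hα).1 (hR α hα).2 w
    · have h2α : Tendsto (fun α : ℝ => 2 * α * ‖w‖) (𝓝 0) (𝓝 0) := by
        simpa using ((tendsto_id (x := 𝓝 (0 : ℝ))).const_mul 2).mul_const ‖w‖
      exact h2α.mono_left nhdsWithin_le_nhds

end Resolvent

/-- With Q = GG*, G* injective, and u_α = G*(αI+Q)⁻¹z for α ∈ (0,1], one has
G u_α = z - α(αI+Q)⁻¹z, and consequently G u_α → z as α → 0⁺. -/
theorem stmt_10 {W Z : Type*} [NormedAddCommGroup W] [InnerProductSpace ℝ W] [CompleteSpace W]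
    [NormedAddCommGroup Z] [InnerProductSpace ℝ Z] [CompleteSpace Z]
    (G : W →L[ℝ] Z) (hG : Function.Injective (ContinuousLinearMap.adjoint G))
    (Q : Z →L[ℝ] Z) (hQ : Q = G.comp (ContinuousLinearMap.adjoint G))
    (R : ℝ → Z →L[ℝ] Z)
    (hR : ∀ α : ℝ, 0 < α →
      (α • ContinuousLinearMap.id ℝ Z + Q).comp (R α) = ContinuousLinearMap.id ℝ Z ∧
      (R α).comp (α • ContinuousLinearMap.id ℝ Z + Q) = ContinuousLinearMap.id ℝ Z)
    (u : ℝ → Z → W)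
    (hu : ∀ α ∈ Set.Ioc (0:ℝ) 1, ∀ z : Z, u α z = ContinuousLinearMap.adjoint G (R α z)) :
    (∀ α ∈ Set.Ioc (0:ℝ) 1, ∀ z : Z, G (u α z) = z - α • R α z) ∧
    (∀ z : Z, Tendsto (fun α : ℝ => G (u α z)) (𝓝[>] 0) (𝓝 z)) := by
  subst hQ
  have hGu : ∀ α ∈ Set.Ioc (0:ℝ) 1, ∀ z : Z, G (u α z) = z - α • R α z := fun α hα z => by
    rw [hu α hα z]
    exact eq_sub_of_add_eq' (smul_apply_add_apply_of_comp_eq_id (hR α hα.1).1 z)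
  refine ⟨hGu, fun z => ?_⟩
  have hlim := (tendsto_smul_apply_of_comp_eq_id (isPositive_self_comp_adjoint G)
    (denseRange_self_comp_adjoint G hG) hR z).const_sub z
  rw [sub_zero] at hlim
  refine hlim.congr' ?_
  filter_upwards [Ioc_mem_nhdsGT (zero_lt_one' ℝ)] with α hα
  exact (hGu α hα z).symm
end

section
/- Let S(t) be the heat semigroup on X = L²(0,π) given by S(t)x = Σₙ e^{-n²t}⟨x,φₙ⟩φₙ, and B_θ the multiplication by the indicator of a nonempty open set θ ⊂ (0,π). If B_θ S(T−t) ξ = 0 for all t ∈ [T−l, T] (with 0 < l ≤ T), then ξ = 0. -/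
/-!
Fix `x ∈ θ` and put `aₙ = ⟨ξ, sin ((n+1)·)⟩ sin ((n+1) x)`, a bounded sequence. With
`q = exp (-(T - t))` the hypothesis says that `∑ aₙ q ^ (n+1)²` vanishes for `q` in an interval
inside `(0, 1)`; this is a power series of radius at least `1`, so by the identity theorem all
`aₙ` vanish. As `θ` is open, each `sin ((n+1)·)` is nonzero somewhere on `θ`, hence all sine
coefficients of `ξ` vanish. Since `sin ((n+1) y) = Uₙ (cos y) sin y` and the Chebyshev polynomials
`Uₙ` span `ℝ[X]`, the function `ξ sin` is orthogonal to every `p (cos y)`, hence, by Weierstrass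
and the injectivity of `cos` on `[0, π]`, to every continuous function; so it vanishes a.e.
-/

open Real MeasureTheory Set Function

theorem FormalMultilinearSeries.one_le_radius_ofScalars {𝕜 : Type*} [NontriviallyNormedField 𝕜]
    {b : ℕ → 𝕜} {C : ℝ} (hb : ∀ n, ‖b n‖ ≤ C) : 1 ≤ (ofScalars 𝕜 b).radius :=
  ENNReal.le_of_forall_nnreal_lt fun r hr => le_radius_of_bound _ C fun n => by
    rw [ofScalars_norm]
    exact (mul_le_of_le_one_right (norm_nonneg _) (pow_le_one₀ r.2 (by exact_mod_cast hr.le))).trans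
      (hb n)

theorem eq_zero_of_tsum_mul_pow_eq_zero_on {g : ℕ → ℕ} (hg : Injective g) {a : ℕ → ℝ} {C : ℝ}
    (ha : ∀ n, |a n| ≤ C) {U : Set ℝ} (hU : IsOpen U) (hUne : U.Nonempty)
    (hU1 : U ⊆ Metric.ball 0 1) (h : ∀ q ∈ U, ∑' n, a n * q ^ g n = 0) : a = 0 := by
  set b : ℕ → ℝ := extend g a 0
  have hb : ∀ m, ‖b m‖ ≤ C := fun m => by
    by_cases hm : ∃ n, g n = m
    · obtain ⟨n, rfl⟩ := hm
      simpa [b, hg.extend_apply] using ha n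
    · simpa [b, extend_apply' _ _ _ hm] using (abs_nonneg _).trans (ha 0)
  set p := FormalMultilinearSeries.ofScalars ℝ b
  have hrad : 1 ≤ p.radius := FormalMultilinearSeries.one_le_radius_ofScalars hb
  have hsum : ∀ q, p.sum q = ∑' n, a n * q ^ g n := fun q => by
    rw [← tsum_extend_zero hg]
    refine (FormalMultilinearSeries.ofScalars_sum_eq b q).trans (tsum_congr fun m => ?_)
    by_cases hm : ∃ n, g n = m
    · obtain ⟨n, rfl⟩ := hm
      simp [b, hg.extend_apply]
    · simp [b, extend_apply' _ _ _ hm]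
  have hp := p.hasFPowerSeriesOnBall (one_pos.trans_le hrad)
  have hball : Metric.ball (0 : ℝ) 1 ⊆ Metric.eball 0 p.radius := by
    rw [← Metric.eball_ofReal, ENNReal.ofReal_one]
    exact Metric.eball_subset_eball hrad
  obtain ⟨q₀, hq₀⟩ := hUne
  have hzero : EqOn p.sum 0 (Metric.ball 0 1) :=
    (hp.analyticOnNhd.mono hball).eqOn_zero_of_preconnected_of_eventuallyEq_zero
      (convex_ball 0 1).isPreconnected (hU1 hq₀)
      (Filter.eventually_of_mem (hU.mem_nhds hq₀) fun q hq => (hsum q).trans (h q hq))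
  have hp0 : p = 0 := hp.hasFPowerSeriesAt.eq_zero_of_eventually
    (Filter.eventually_of_mem (Metric.ball_mem_nhds 0 one_pos) hzero)
  ext n
  simpa [b, hg.extend_apply] using
    congrFun ((FormalMultilinearSeries.ofScalars_series_eq_zero ℝ).1 hp0) (g n)

theorem eq_zero_of_tsum_mul_exp_eq_zero_s15 {a : ℕ → ℝ} {C l : ℝ} (ha : ∀ n, |a n| ≤ C)
    (hl : 0 < l) (h : ∀ s ∈ Ioo 0 l, ∑' n, a n * exp (-((n : ℝ) + 1) ^ 2 * s) = 0) : a = 0 := by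
  have hinj : Injective fun n : ℕ => (n + 1) ^ 2 := fun m n hmn => by
    simpa using Nat.pow_left_injective two_ne_zero hmn
  refine eq_zero_of_tsum_mul_pow_eq_zero_on hinj ha isOpen_Ioo
    (nonempty_Ioo.2 (exp_lt_one_iff.2 (neg_neg_of_pos hl))) ?_ fun q ⟨hlq, hq1⟩ => ?_
  · rw [Real.ball_eq_Ioo, zero_sub, zero_add]
    exact Ioo_subset_Ioo_left ((neg_one_lt_zero).le.trans (exp_pos _).le)
  · have hq0 : 0 < q := (exp_pos _).trans hlq
    rw [← h (-log q) ⟨neg_pos.2 (log_neg hq0 hq1), neg_lt.1 ((lt_log_iff_exp_lt hq0).2 hlq)⟩]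
    refine tsum_congr fun n => ?_
    rw [show -((n : ℝ) + 1) ^ 2 * -log q = ((n + 1) ^ 2 : ℕ) * log q by push_cast; ring,
      exp_nat_mul, exp_log hq0]

theorem exists_mem_sin_mul_ne_zero {c : ℝ} (hc : c ≠ 0) {U : Set ℝ} (hU : IsOpen U)
    (hne : U.Nonempty) : ∃ x ∈ U, sin (c * x) ≠ 0 := by
  have hzeros : {x | sin (c * x) = 0}.Countable :=
    (countable_range fun k : ℤ => k * π / c).mono fun x hx => by
      obtain ⟨k, hk⟩ := sin_eq_zero_iff.1 hx
      exact ⟨k, by field_simp; linarith⟩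
  obtain ⟨x, hxU, hx⟩ := (hzeros.dense_compl ℝ).inter_open_nonempty U hU hne
  exact ⟨x, hxU, hx⟩

open Polynomial Chebyshev in
theorem intervalIntegral_mul_eval_cos_eq_zero {η : ℝ → ℝ} {a b : ℝ}
    (hη : IntervalIntegrable η volume a b)
    (h : ∀ n : ℕ, ∫ y in a..b, η y * (U ℝ n).eval (cos y) = 0) (p : ℝ[X]) :
    ∫ y in a..b, η y * p.eval (cos y) = 0 := by
  let S : Polynomial.Sequence ℝ := ⟨fun n => U ℝ n, degree_U_natCast ℝ⟩
  have hp : p ∈ Submodule.span ℝ (range S) := by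
    rw [S.span fun n => (leadingCoeff_ne_zero.2 (S.ne_zero n)).isUnit]
    trivial
  have hint : ∀ q : ℝ[X], IntervalIntegrable (fun y => η y * q.eval (cos y)) volume a b :=
    fun q => hη.mul_continuousOn (q.continuous.comp continuous_cos).continuousOn
  induction hp using Submodule.span_induction with
  | mem q hq => obtain ⟨n, rfl⟩ := hq; exact h n
  | zero => simp
  | add q r _ _ hq hr =>
    simp [mul_add, intervalIntegral.integral_add (hint q) (hint r), hq, hr]
  | smul c q _ hq => simp [mul_left_comm _ c, intervalIntegral.integral_const_mul, hq]

theorem intervalIntegral_mul_eq_zero_of_forall_eval_cos {η : ℝ → ℝ}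
    (hη : IntervalIntegrable η volume 0 π)
    (h : ∀ p : Polynomial ℝ, ∫ y in 0..π, η y * p.eval (cos y) = 0) {g : ℝ → ℝ}
    (hg : Continuous g) : ∫ y in 0..π, η y * g y = 0 := by
  set K := ∫ y in 0..π, |η y|
  have hK : 0 ≤ K := intervalIntegral.integral_nonneg pi_pos.le fun _ _ => abs_nonneg _
  refine eq_of_forall_dist_le fun ε hε => ?_
  obtain ⟨p, hp⟩ := exists_polynomial_near_of_continuousOn (-1) 1 (g ∘ arccos)
    (hg.comp continuous_arccos).continuousOn (ε / (K + 1)) (by positivity)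
  have hclose : ∀ y ∈ Icc 0 π, ‖g y - p.eval (cos y)‖ ≤ ε / (K + 1) := fun y hy => by
    have := hp (cos y) ⟨neg_one_le_cos y, cos_le_one y⟩
    rw [comp_apply, arccos_cos hy.1 hy.2, abs_sub_comm] at this
    exact this.le
  have hpcos : IntervalIntegrable (fun y => η y * p.eval (cos y)) volume 0 π :=
    hη.mul_continuousOn (p.continuous.comp continuous_cos).continuousOn
  have hg' := hη.mul_continuousOn hg.continuousOn
  calc dist (∫ y in 0..π, η y * g y) 0
      = ‖∫ y in 0..π, η y * (g y - p.eval (cos y))‖ := by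
        simp_rw [mul_sub]
        rw [intervalIntegral.integral_sub hg' hpcos, h p, sub_zero, dist_zero_right]
    _ ≤ ∫ y in 0..π, |η y| * (ε / (K + 1)) :=
        intervalIntegral.norm_integral_le_of_norm_le pi_pos.le
          (ae_of_all _ fun y hy => by
            rw [norm_mul, norm_eq_abs]
            exact mul_le_mul_of_nonneg_left (hclose y (Ioc_subset_Icc_self hy)) (abs_nonneg _))
          (hη.abs.mul_const _)
    _ = K * (ε / (K + 1)) := intervalIntegral.integral_mul_const _ _
    _ ≤ ε := by
        rw [mul_div_assoc', div_le_iff₀ (by positivity)]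
        nlinarith

open Polynomial Chebyshev in
theorem ae_eq_zero_of_forall_intervalIntegral_mul_sin_eq_zero {ξ : ℝ → ℝ}
    (hξ : IntervalIntegrable ξ volume 0 π)
    (h : ∀ n : ℕ, ∫ y in 0..π, ξ y * sin ((n + 1) * y) = 0) :
    ξ =ᵐ[volume.restrict (Ioo 0 π)] 0 := by
  set η := fun y => ξ y * sin y
  have hη : IntervalIntegrable η volume 0 π := hξ.mul_continuousOn continuous_sin.continuousOn
  have hcheb : ∀ n : ℕ, ∫ y in 0..π, η y * (U ℝ n).eval (cos y) = 0 := fun n => by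
    refine (intervalIntegral.integral_congr fun y _ => ?_).trans (h n)
    have hU := U_real_cos y n
    push_cast at hU
    simp only [η, ← hU]
    ring
  have hpoly := intervalIntegral_mul_eval_cos_eq_zero hη hcheb
  have hη0 : ∀ᵐ y ∂volume.restrict (Ioc 0 π), η y = 0 := by
    refine ae_eq_zero_of_integral_contDiff_smul_eq_zero hη.1.locallyIntegrable fun g hg _ => ?_
    rw [← intervalIntegral.integral_of_le pi_pos.le]
    simpa [mul_comm] using intervalIntegral_mul_eq_zero_of_forall_eval_cos hη hpoly hg.continuous
  filter_upwards [ae_restrict_of_ae_restrict_of_subset Ioo_subset_Ioc_self hη0,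
    ae_restrict_mem measurableSet_Ioo] with y hy hy'
  exact (mul_eq_zero.1 hy).resolve_right (sin_pos_of_pos_of_lt_pi hy'.1 hy'.2).ne'

theorem stmt_15_general (ξ : ℝ → ℝ) (hξ : MemLp ξ 2 (volume.restrict (Set.Ioo 0 π)))
    (T l : ℝ) (hl : 0 < l) (θ : Set ℝ) (hθopen : IsOpen θ)
    (hθne : θ.Nonempty)
    (h : ∀ t ∈ Set.Icc (T - l) T, ∀ x ∈ θ,
      ∑' n : ℕ, Real.exp (-((n : ℝ) + 1) ^ 2 * (T - t)) *
        (∫ y in (0:ℝ)..π, ξ y * Real.sin (((n : ℝ) + 1) * y)) *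
        Real.sin (((n : ℝ) + 1) * x) = 0) :
    ξ =ᵐ[volume.restrict (Set.Ioo 0 π)] 0 := by
  have hξi : IntervalIntegrable ξ volume 0 π := by
    rw [intervalIntegrable_iff_integrableOn_Ioo_of_le pi_pos.le]
    exact hξ.integrable one_le_two
  set c : ℕ → ℝ := fun n => ∫ y in (0:ℝ)..π, ξ y * sin ((n + 1) * y)
  have hc : ∀ x n, |c n * sin ((n + 1) * x)| ≤ ∫ y in (0:ℝ)..π, |ξ y| := fun x n => by
    rw [abs_mul]
    refine (mul_le_of_le_one_right (abs_nonneg _) (abs_sin_le_one _)).trans ?_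
    rw [← norm_eq_abs]
    refine intervalIntegral.norm_integral_le_of_norm_le pi_pos.le
      (ae_of_all _ fun y _ => ?_) hξi.abs
    rw [norm_mul, norm_eq_abs]
    exact mul_le_of_le_one_right (abs_nonneg _) (abs_sin_le_one _)
  refine ae_eq_zero_of_forall_intervalIntegral_mul_sin_eq_zero hξi fun n => ?_
  obtain ⟨x, hxθ, hx⟩ := exists_mem_sin_mul_ne_zero (Nat.cast_add_one_ne_zero n) hθopen hθne
  have hcx := eq_zero_of_tsum_mul_exp_eq_zero_s15 (hc x) hl fun s hs => by
    rw [← h (T - s) ⟨by linarith [hs.2], by linarith [hs.1]⟩ x hxθ]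
    exact tsum_congr fun m => by rw [sub_sub_cancel]; ring
  exact (mul_eq_zero.1 (congrFun hcx n)).resolve_right hx

/-- Condition (b) for the 1-D heat equation: if B_θ S(T−t) ξ = 0 (pointwise on θ,
with the spectral expansion of the heat semigroup) for all t ∈ [T−l, T] with
0 < l ≤ T, then ξ = 0 (a.e. on (0,π)). -/
theorem stmt_15 (ξ : ℝ → ℝ) (hξ : MemLp ξ 2 (volume.restrict (Set.Ioo 0 π)))
    (T l : ℝ) (hl : 0 < l) (hlT : l ≤ T) (θ : Set ℝ) (hθopen : IsOpen θ)
    (hθne : θ.Nonempty) (hθsub : θ ⊆ Set.Ioo 0 π)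
    (h : ∀ t ∈ Set.Icc (T - l) T, ∀ x ∈ θ,
      ∑' n : ℕ, Real.exp (-((n : ℝ) + 1) ^ 2 * (T - t)) *
        (∫ y in (0:ℝ)..π, ξ y * Real.sin (((n : ℝ) + 1) * y)) *
        Real.sin (((n : ℝ) + 1) * x) = 0) :
    ξ =ᵐ[volume.restrict (Set.Ioo 0 π)] 0 :=
  stmt_15_general ξ hξ T l hl θ hθopen hθne h
end
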